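/- Let Λ be a maximal O-order in Mat_n(F) (O the ring of integers of a number field F), let Z ⊆ F^n be the O-module generated by the first columns of elements of Λ, and suppose Z has Steinitz form Z = O z₁ ⊕ … ⊕ O z_{n−1} ⊕ 𝔞 z_n with z_i ∈ F^n and 𝔞 an ideal of O. If S ∈ GL_n(F) is the matrix with columns z₁,…,z_n, then Λ = S Λ_{𝔞,n} S^{-1}. -/

import Mathlib

open scoped NumberField nonZeroDivisors

section

variable {F : Type*} [Field F] [NumberField F]

/-- The fractional ideal prescribing the `(i,j)` entry of the standard maximal order
`Λ_{𝔞,n}` in `Mat_n(F)`: entries are in `𝓞 F` except in the last column (in `𝔞⁻¹`) and the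
last row (in `𝔞`), with the `(n,n)` corner in `𝓞 F`. -/
noncomputable def entryIdeal (𝔞 : FractionalIdeal (𝓞 F)⁰ F) (n : ℕ) (i j : Fin n) :
    FractionalIdeal (𝓞 F)⁰ F :=
  if i.val = n - 1 then (if j.val = n - 1 then 1 else 𝔞) else (if j.val = n - 1 then 𝔞⁻¹ else 1)

/-- The standard ("nice form") maximal order `Λ_{𝔞,n}` in `Mat_n(F)`. -/
noncomputable def stdOrder (𝔞 : FractionalIdeal (𝓞 F)⁰ F) (n : ℕ) :
    Set (Matrix (Fin n) (Fin n) F) :=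
  {x | ∀ i j, x i j ∈ entryIdeal 𝔞 n i j}

/-- An `𝓞 F`-order of full rank in `Mat_n(F)`: a subring, stable under `𝓞 F`, finitely
generated as an `𝓞 F`-module, and spanning `Mat_n(F)` over `F`. -/
def IsOrderSet {n : ℕ} (S : Set (Matrix (Fin n) (Fin n) F)) : Prop :=
  (1 : Matrix (Fin n) (Fin n) F) ∈ S ∧
  (∀ x ∈ S, ∀ y ∈ S, x + y ∈ S) ∧ (∀ x ∈ S, -x ∈ S) ∧
  (∀ x ∈ S, ∀ y ∈ S, x * y ∈ S) ∧
  (∀ r : 𝓞 F, ∀ x ∈ S, r • x ∈ S) ∧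
  (∃ t : Finset (Matrix (Fin n) (Fin n) F), (t : Set (Matrix (Fin n) (Fin n) F)) ⊆ S ∧
    S ⊆ (Submodule.span (𝓞 F) (t : Set (Matrix (Fin n) (Fin n) F)) : Set (Matrix (Fin n) (Fin n) F))) ∧
  Submodule.span F S = ⊤

/-- A maximal `𝓞 F`-order in `Mat_n(F)`. -/
def IsMaximalOrderSet {n : ℕ} (S : Set (Matrix (Fin n) (Fin n) F)) : Prop :=
  IsOrderSet S ∧ ∀ S' : Set (Matrix (Fin n) (Fin n) F), IsOrderSet S' → S ⊆ S' → S' = S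

end

/-!
Let `Z` be the `𝓞 F`-lattice spanned by the first columns of elements of `Λ`. Since `Λ` is closed
under multiplication, `Λ` stabilizes `Z`, so `Λ` lies in the stabilizer `{x | x Z ⊆ Z}`; this
stabilizer is itself an order, hence equals `Λ` by maximality. The Steinitz form says
`Z = S (𝓞 F ⊕ ⋯ ⊕ 𝓞 F ⊕ 𝔞)`, so the stabilizer of `Z` is `S` times the stabilizer of
`L = 𝓞 F ⊕ ⋯ ⊕ 𝓞 F ⊕ 𝔞` times `S⁻¹`. Finally, for a product lattice `L = ∏ Cᵢ` of nonzero
fractional ideals, `x L ⊆ L` iff `x i j Cⱼ ⊆ Cᵢ` for all `i, j`, i.e. `x i j ∈ Cᵢ / Cⱼ`, and these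
quotients are exactly the entry ideals of `Λ_{𝔞,n}`.
-/

open Matrix Set

section Stabilizer

variable {ι K : Type*} [Fintype ι] [CommRing K]

def mulVecStabilizer (L : Set (ι → K)) : Set (Matrix ι ι K) :=
  {x | ∀ v ∈ L, x *ᵥ v ∈ L}

theorem mulVecStabilizer_image_mulVec [DecidableEq ι] {S : Matrix ι ι K} (hS : IsUnit S.det)
    (L : Set (ι → K)) :
    mulVecStabilizer ((S *ᵥ ·) '' L) = (fun x => S * x * S⁻¹) '' mulVecStabilizer L := by
  ext x
  constructor
  · intro hx
    refine ⟨S⁻¹ * x * S, fun v hv => ?_, ?_⟩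
    · obtain ⟨w, hw, hxw⟩ := hx _ ⟨v, hv, rfl⟩
      rwa [← mulVec_mulVec, ← mulVec_mulVec, ← hxw, mulVec_mulVec, nonsing_inv_mul S hS,
        one_mulVec]
    · dsimp only
      rw [← Matrix.mul_assoc S, mul_nonsing_inv_cancel_right S _ hS,
        mul_nonsing_inv_cancel_left S _ hS]
  · rintro ⟨y, hy, rfl⟩ _ ⟨v, hv, rfl⟩
    refine ⟨y *ᵥ v, hy v hv, ?_⟩
    dsimp only
    rw [mulVec_mulVec, mulVec_mulVec, nonsing_inv_mul_cancel_right S _ hS]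

theorem subset_mulVecStabilizer_span_col {R : Type*} [CommSemiring R] [Algebra R K]
    {Λ : Set (Matrix ι ι K)} (hmul : ∀ x ∈ Λ, ∀ y ∈ Λ, x * y ∈ Λ) (j : ι) :
    Λ ⊆ mulVecStabilizer (Submodule.span R {w | ∃ m ∈ Λ, w = fun i => m i j} : Set (ι → K)) := by
  intro x hx v hv
  let f : (ι → K) →ₗ[R] (ι → K) := (mulVecLin x).restrictScalars R
  refine (Submodule.span_le.mpr ?_ : _ ≤ (Submodule.span R _).comap f) hv
  rintro _ ⟨m, hm, rfl⟩
  refine Submodule.subset_span ⟨x * m, hmul x hx m hm, ?_⟩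
  ext i
  simp [f, mulVec, dotProduct, mul_apply]

theorem mem_mulVecStabilizer_pi_iff [DecidableEq ι] {R : Type*} [Semiring R] [Module R K]
    {p : ι → Submodule R K} {x : Matrix ι ι K} :
    x ∈ mulVecStabilizer (Submodule.pi univ p : Set (ι → K)) ↔
      ∀ i j, ∀ a ∈ p j, x i j * a ∈ p i := by
  simp only [mulVecStabilizer, mem_ofPred_eq, SetLike.mem_coe, Submodule.mem_pi, mem_univ,
    true_implies]
  constructor
  · intro hx i j a ha
    have hsingle : ∀ k, (Pi.single j a : ι → K) k ∈ p k := by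
      intro k
      rcases eq_or_ne k j with rfl | hk
      · simpa using ha
      · simp [hk]
    simpa [mulVec_single] using hx _ hsingle i
  · intro hx v hv i
    exact Submodule.sum_mem _ fun j _ => hx i j (v j) (hv j)

end Stabilizer

theorem isOrderSet_mulVecStabilizer {F : Type*} [Field F] {n : ℕ} (M : Submodule (𝓞 F) (Fin n → F))
    {Q : Submodule (𝓞 F) (Matrix (Fin n) (Fin n) F)} (hQ : Q.FG)
    (hMQ : mulVecStabilizer (M : Set (Fin n → F)) = Q)
    (hspan : Submodule.span F (mulVecStabilizer (M : Set (Fin n → F))) = ⊤) :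
    IsOrderSet (mulVecStabilizer (M : Set (Fin n → F))) := by
  obtain ⟨t, rfl⟩ := hQ
  refine ⟨fun v hv => ?_, fun x hx y hy v hv => ?_, fun x hx v hv => ?_,
    fun x hx y hy v hv => ?_, fun r x hx v hv => ?_, ⟨t, ?_, hMQ.le⟩, hspan⟩
  · rwa [one_mulVec]
  · rw [add_mulVec]; exact M.add_mem (hx v hv) (hy v hv)
  · rw [neg_mulVec]; exact M.neg_mem (hx v hv)
  · rw [← mulVec_mulVec]; exact hx _ (hy v hv)
  · rw [smul_mulVec]; exact M.smul_mem r (hx v hv)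
  · rw [hMQ]; exact Submodule.subset_span

section

variable {F : Type*} [Field F] [NumberField F]

noncomputable def stdLatticeIdeal (𝔞 : FractionalIdeal (𝓞 F)⁰ F) (n : ℕ) (i : Fin n) :
    FractionalIdeal (𝓞 F)⁰ F :=
  if i.val = n - 1 then 𝔞 else 1

noncomputable def stdLattice (𝔞 : FractionalIdeal (𝓞 F)⁰ F) (n : ℕ) :
    Submodule (𝓞 F) (Fin n → F) :=
  Submodule.pi univ fun i => (stdLatticeIdeal 𝔞 n i : Submodule (𝓞 F) F)

theorem stdLatticeIdeal_ne_zero {𝔞 : FractionalIdeal (𝓞 F)⁰ F} (h𝔞 : 𝔞 ≠ 0) {n : ℕ}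
    (i : Fin n) : stdLatticeIdeal 𝔞 n i ≠ 0 := by
  unfold stdLatticeIdeal
  split_ifs <;> simp [h𝔞]

theorem entryIdeal_eq_div {𝔞 : FractionalIdeal (𝓞 F)⁰ F} (h𝔞 : 𝔞 ≠ 0) {n : ℕ} (i j : Fin n) :
    entryIdeal 𝔞 n i j = stdLatticeIdeal 𝔞 n i / stdLatticeIdeal 𝔞 n j := by
  unfold entryIdeal stdLatticeIdeal
  split_ifs <;> simp [h𝔞]

theorem stdOrder_eq_mulVecStabilizer {𝔞 : FractionalIdeal (𝓞 F)⁰ F} (h𝔞 : 𝔞 ≠ 0) (n : ℕ) :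
    stdOrder 𝔞 n = mulVecStabilizer (stdLattice 𝔞 n : Set (Fin n → F)) := by
  ext x
  simp only [stdLattice, mem_mulVecStabilizer_pi_iff, stdOrder, entryIdeal_eq_div h𝔞,
    FractionalIdeal.mem_div_iff_of_ne_zero (stdLatticeIdeal_ne_zero h𝔞 _),
    FractionalIdeal.mem_coe]
  rfl

noncomputable def stdOrderSubmodule (𝔞 : FractionalIdeal (𝓞 F)⁰ F) (n : ℕ) :
    Submodule (𝓞 F) (Matrix (Fin n) (Fin n) F) :=
  Submodule.pi univ fun i => Submodule.pi univ fun j => (entryIdeal 𝔞 n i j : Submodule (𝓞 F) F)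

theorem coe_stdOrderSubmodule (𝔞 : FractionalIdeal (𝓞 F)⁰ F) (n : ℕ) :
    (stdOrderSubmodule 𝔞 n : Set (Matrix (Fin n) (Fin n) F)) = stdOrder 𝔞 n := by
  ext x
  exact ⟨fun hx i j => hx i trivial j trivial, fun hx i _ j _ => hx i j⟩

theorem stdOrderSubmodule_fg (𝔞 : FractionalIdeal (𝓞 F)⁰ F) (n : ℕ) :
    (stdOrderSubmodule 𝔞 n).FG :=
  Submodule.fg_pi fun i => Submodule.fg_pi fun j =>
    (entryIdeal 𝔞 n i j).fg_of_isNoetherianRing le_rfl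

theorem exists_fg_coe_eq_image_stdOrder (𝔞 : FractionalIdeal (𝓞 F)⁰ F) {n : ℕ}
    (A B : Matrix (Fin n) (Fin n) F) :
    ∃ Q : Submodule (𝓞 F) (Matrix (Fin n) (Fin n) F),
      Q.FG ∧ (Q : Set (Matrix (Fin n) (Fin n) F)) = (fun x => A * x * B) '' stdOrder 𝔞 n :=
  ⟨_, (stdOrderSubmodule_fg 𝔞 n).map ((LinearMap.mulLeftRight F (A, B)).restrictScalars (𝓞 F)),
    by rw [Submodule.map_coe, coe_stdOrderSubmodule]; rfl⟩

theorem maximalOrder_eq_conj_stdOrder (n : ℕ) (hn : 0 < n)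
    (Λ : Set (Matrix (Fin n) (Fin n) F)) (hΛ : IsMaximalOrderSet Λ)
    (z : Fin n → (Fin n → F)) (𝔞 : Ideal (𝓞 F)) (h𝔞 : 𝔞 ≠ ⊥)
    (S : Matrix (Fin n) (Fin n) F) (hS : S = Matrix.of fun i j => z j i) (hSu : IsUnit S.det)
    (hZ : ∀ v : Fin n → F,
      (v ∈ Submodule.span (𝓞 F) {w : Fin n → F | ∃ m ∈ Λ, w = fun i => m i ⟨0, hn⟩}) ↔
      ∃ c : Fin n → F,
        (∀ i : Fin n, c i ∈ (if i.val = n - 1 then (𝔞 : FractionalIdeal (𝓞 F)⁰ F) else 1)) ∧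
        v = ∑ i, c i • z i) :
    Λ = (fun x => S * x * S⁻¹) '' stdOrder (𝔞 : FractionalIdeal (𝓞 F)⁰ F) n := by
  obtain ⟨⟨-, -, -, hmul, -, -, hspan⟩, hmax⟩ := hΛ
  set Z := Submodule.span (𝓞 F) {w : Fin n → F | ∃ m ∈ Λ, w = fun i => m i ⟨0, hn⟩}
  have hcols : ∀ c : Fin n → F, ∑ i, c i • z i = S *ᵥ c := fun c => by
    rw [hS]; exact (vecMul_eq_sum c (of z)).symm.trans (mulVec_transpose _ c).symm
  have hZS : (Z : Set (Fin n → F)) =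
      (S *ᵥ ·) '' (stdLattice (𝔞 : FractionalIdeal (𝓞 F)⁰ F) n : Set (Fin n → F)) := by
    ext v
    simp only [SetLike.mem_coe, hZ v, hcols, mem_image, stdLattice, Submodule.mem_pi, mem_univ,
      true_implies, FractionalIdeal.mem_coe, stdLatticeIdeal, eq_comm]
  have hstab : mulVecStabilizer (Z : Set (Fin n → F)) =
      (fun x => S * x * S⁻¹) '' stdOrder (𝔞 : FractionalIdeal (𝓞 F)⁰ F) n := by
    rw [hZS, mulVecStabilizer_image_mulVec hSu,
      stdOrder_eq_mulVecStabilizer (FractionalIdeal.coeIdeal_ne_zero.mpr h𝔞)]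
  have hsub : Λ ⊆ mulVecStabilizer (Z : Set (Fin n → F)) := subset_mulVecStabilizer_span_col hmul _
  obtain ⟨Q, hQ, hQS⟩ := exists_fg_coe_eq_image_stdOrder (𝔞 : FractionalIdeal (𝓞 F)⁰ F) S S⁻¹
  have hord : IsOrderSet (mulVecStabilizer (Z : Set (Fin n → F))) :=
    isOrderSet_mulVecStabilizer Z hQ (hstab.trans hQS.symm)
      (top_unique (hspan ▸ Submodule.span_mono hsub))
  rw [← hstab, hmax _ hord hsub]

end
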